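/- arXiv:1804.04081 — 4 statements merged into one kernel-verified Lean document; each statement's English description precedes it below -/
import Mathlib

section
/- Let g be a Lie algebra generated by X_{ir}^± (i ∈ I, r ≥ 0) satisfying [X_{i,r+1}^±, X_{js}^±] = [X_{ir}^±, X_{j,s+1}^±] for all i,j ∈ I and r,s ≥ 0. Then for any n ≥ 1, any i, j ∈ I, any s ≥ 0, and any k_1,…,k_n ≥ 0 with k_1 + ⋯ + k_n = k: [X_{ik}^±, ad(X_{i0}^±)^{n-1}(X_{js}^±)] = [X_{i,k_1}^±, [X_{i,k_2}^±, …, [X_{i,k_n}^±, X_{js}^±]⋯]]. -/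
/-!
Let `x = X_i` and `ad = ad(x 0)`. Applied with `j = i`, the shift relation gives
`[x p, x q] = [x 0, x (p + q)] = [x q, x p]`, so all the `x r` commute with each other (over `ℂ`
we may divide by `2`). Hence `ad(x r)` commutes with `ad`, and the shift relation survives
replacing `X_j s` by `ad^m (X_j s)`. Moving the whole degree of the left factor onto the right one,
`[x k, ad^m (X_j s)] = ad^(m+1) (X_j (s + k))`, and induction on the list `k_1, …, k_n` collapses
the nested commutator.
-/

section DegreeShift

variable {L : Type*} [LieRing L]

def DegreeShift (x y : ℕ → L) : Prop :=
  ∀ r s, ⁅x (r + 1), y s⁆ = ⁅x r, y (s + 1)⁆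

namespace DegreeShift

variable {x y : ℕ → L}

theorem lie_add_left (h : DegreeShift x y) (k r s : ℕ) :
    ⁅x (r + k), y s⁆ = ⁅x r, y (s + k)⁆ := by
  induction k generalizing r s with
  | zero => rfl
  | succ k ih => rw [← add_assoc, h, ih, add_right_comm, add_assoc]

theorem lie_eq_lie_zero (h : DegreeShift x y) (r s : ℕ) : ⁅x r, y s⁆ = ⁅x 0, y (s + r)⁆ := by
  simpa using h.lie_add_left r 0 s

theorem lie_self_eq_zero [IsAddTorsionFree L] (h : DegreeShift x x) (p q : ℕ) :
    ⁅x p, x q⁆ = 0 := by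
  have hsymm : ⁅x p, x q⁆ = ⁅x q, x p⁆ := by
    rw [h.lie_eq_lie_zero p q, h.lie_eq_lie_zero q p, add_comm]
  exact self_eq_neg.mp (hsymm.trans (lie_skew (x q) (x p)).symm)

theorem iterate_ad (hxx : ∀ r, ⁅x r, x 0⁆ = 0) (h : DegreeShift x y) (m : ℕ) :
    DegreeShift x (fun s => (fun z => ⁅x 0, z⁆)^[m] (y s)) := by
  induction m with
  | zero => exact h
  | succ m ih =>
    intro r s
    simp only [Function.iterate_succ_apply']
    rw [leibniz_lie, hxx, zero_lie, zero_add, ih, leibniz_lie (x r), hxx, zero_lie, zero_add]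

theorem lie_iterate_eq_foldr (hxx : ∀ r, ⁅x r, x 0⁆ = 0) (h : DegreeShift x y)
    (k : ℕ) (ks : List ℕ) (s : ℕ) :
    ⁅x (k + ks.sum), (fun z => ⁅x 0, z⁆)^[ks.length] (y s)⁆
      = (k :: ks).foldr (fun k acc => ⁅x k, acc⁆) (y s) := by
  induction ks generalizing k with
  | nil => simp
  | cons k' ks ih =>
    have hk' := (h.iterate_ad hxx ks.length).lie_eq_lie_zero (k' + ks.sum) s
    rw [List.foldr_cons, ← ih, hk', ← Function.iterate_succ_apply' (fun z => ⁅x 0, z⁆),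
      ← (h.iterate_ad hxx _).lie_add_left, List.sum_cons, List.length_cons]

end DegreeShift

end DegreeShift

/-- In a Lie algebra with elements `X_{ir}^±` satisfying the degree-shift
relation `[X_{i,r+1}^±, X_{js}^±] = [X_{ir}^±, X_{j,s+1}^±]`, for any `n ≥ 1`, any
`i, j`, any `s ≥ 0` and any `k_1, …, k_n ≥ 0` with `k_1 + ⋯ + k_n = k`:
`[X_{ik}^±, ad(X_{i0}^±)^{n-1}(X_{js}^±)] = [X_{i,k_1}^±, [X_{i,k_2}^±, …, [X_{i,k_n}^±, X_{js}^±]⋯]]`.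
The list `ks = [k_1, …, k_n]` encodes the degrees; `ad(x)^{m}` is the `m`-fold iterate
of `y ↦ ⁅x, y⁆`; the sign `±` is encoded by `ε : Bool`. -/
theorem stmt7 {L : Type*} [LieRing L] [LieAlgebra ℂ L] {I : Type*}
    (X : Bool → I → ℕ → L)
    (hshift : ∀ (ε : Bool) (i j : I) (r s : ℕ),
      ⁅X ε i (r + 1), X ε j s⁆ = ⁅X ε i r, X ε j (s + 1)⁆) :
    ∀ (ε : Bool) (i j : I) (s : ℕ) (n : ℕ), 1 ≤ n →
      ∀ ks : List ℕ, ks.length = n →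
        ⁅X ε i ks.sum, (fun y => ⁅X ε i 0, y⁆)^[n - 1] (X ε j s)⁆
          = ks.foldr (fun k acc => ⁅X ε i k, acc⁆) (X ε j s) := by
  have : IsAddTorsionFree L := .of_isTorsionFree ℂ L
  rintro ε i j s n hn (_ | ⟨k, ks⟩) rfl
  · simp at hn
  have hxx : ∀ r, ⁅X ε i r, X ε i 0⁆ = 0 := fun r =>
    DegreeShift.lie_self_eq_zero (hshift ε i i) r 0
  simpa using DegreeShift.lie_iterate_eq_foldr hxx (hshift ε i j) k ks s
end

section
/- Let s be the Lie algebra generated by {X_{ir}^±, H_{ir}}_{i∈I, r≥0} with relations: [H_{ir},H_{js}]=0, [H_{ir},X_{js}^±]=±2d_{ij}X_{j,r+s}^±, [X_{ir}^+,X_{js}^-]=δ_{ij}H_{i,r+s}, [X_{i,r+1}^±,X_{js}^±]=[X_{ir}^±,X_{j,s+1}^±], and ad(X_{i0}^±)^{1-a_{ij}}(X_{jr}^±)=0 for i≠j. Then for all i≠j, m = 1 - a_{ij}, s ≥ 0 and all r_1,…,r_m ≥ 0: [X_{i,r_1}^±, [X_{i,r_2}^±, …, [X_{i,r_m}^±,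 X_{js}^±]⋯]] = 0. -/
/-!
The shift relation `[x_{r+1}, y_s] = [x_r, y_{s+1}]` lets one move all the degree of a
bracket onto its second entry: `[x_r, y_s] = [x_0, y_{r+s}]`. Taking `y = x` shows that
`[x_r, x_{r'}]` is symmetric in `r, r'`, hence zero as `L` has no 2-torsion, so the
operators `ad x_r` commute. Consequently the iterates `ad(x_0)^n y_t` again satisfy the
shift relation with `x`, and an iterated bracket `[x_{r_1}, [x_{r_2}, …, [x_{r_m}, y_s]⋯]]` equals
`ad(x_0)^m y_{s + r_1 + ⋯ + r_m}`, which vanishes by the degree-zero Serre relation.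
-/

namespace LieShift

variable {L : Type*} [LieRing L]

def IsShiftPair (x y : ℕ → L) : Prop :=
  ∀ r s, ⁅x (r + 1), y s⁆ = ⁅x r, y (s + 1)⁆

def adZeroIter (x y : ℕ → L) (n t : ℕ) : L :=
  (fun v => ⁅x 0, v⁆)^[n] (y t)

variable {x y : ℕ → L}

theorem IsShiftPair.lie_eq_lie_zero (h : IsShiftPair x y) (r s : ℕ) :
    ⁅x r, y s⁆ = ⁅x 0, y (r + s)⁆ := by
  induction r generalizing s with
  | zero => rw [Nat.zero_add]
  | succ r ih => rw [h, ih, Nat.add_right_comm, Nat.add_assoc]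

theorem IsShiftPair.lie_self_eq_zero [IsAddTorsionFree L] (h : IsShiftPair x x) (r s : ℕ) :
    ⁅x r, x s⁆ = 0 := by
  have hsymm : ⁅x r, x s⁆ = ⁅x s, x r⁆ := by
    rw [h.lie_eq_lie_zero r s, h.lie_eq_lie_zero s r, Nat.add_comm]
  rw [← self_eq_neg]
  nth_rw 1 [hsymm]
  exact (lie_skew _ _).symm

theorem lie_lie_comm_of_lie_eq_zero {a b : L} (hab : ⁅a, b⁆ = 0) (v : L) :
    ⁅a, ⁅b, v⁆⁆ = ⁅b, ⁅a, v⁆⁆ := by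
  rw [leibniz_lie, hab, zero_lie, zero_add]

theorem adZeroIter_succ (n t : ℕ) :
    adZeroIter x y (n + 1) t = ⁅x 0, adZeroIter x y n t⁆ :=
  Function.iterate_succ_apply' _ _ _

theorem isShiftPair_adZeroIter [IsAddTorsionFree L] (hxx : IsShiftPair x x)
    (hxy : IsShiftPair x y) (n : ℕ) : IsShiftPair x (adZeroIter x y n) := by
  induction n with
  | zero => exact hxy
  | succ n ih =>
    intro r t
    rw [adZeroIter_succ, adZeroIter_succ,
      lie_lie_comm_of_lie_eq_zero (hxx.lie_self_eq_zero (r + 1) 0), ih,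
      lie_lie_comm_of_lie_eq_zero (hxx.lie_self_eq_zero 0 r)]

theorem IsShiftPair.foldr_lie_eq_adZeroIter [IsAddTorsionFree L] (hxx : IsShiftPair x x)
    (hxy : IsShiftPair x y) (rs : List ℕ) (s : ℕ) :
    rs.foldr (fun r acc => ⁅x r, acc⁆) (y s) = adZeroIter x y rs.length (s + rs.sum) := by
  induction rs with
  | nil => rfl
  | cons r rs ih =>
    rw [List.foldr_cons, ih, (isShiftPair_adZeroIter hxx hxy _).lie_eq_lie_zero,
      ← adZeroIter_succ, List.length_cons, List.sum_cons]
    congr 1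
    omega

end LieShift

open LieShift in
theorem stmt8_general {L : Type*} [LieRing L] [LieAlgebra ℂ L] {I : Type*}
    (X : Bool → I → ℕ → L) (a : I → I → ℤ)
    (hshift : ∀ (ε : Bool) (i j : I) (r s : ℕ),
      ⁅X ε i (r + 1), X ε j s⁆ = ⁅X ε i r, X ε j (s + 1)⁆)
    (hserre0 : ∀ (ε : Bool) (i j : I), i ≠ j → ∀ r : ℕ,
      (fun y => ⁅X ε i 0, y⁆)^[(1 - a i j).toNat] (X ε j r) = 0) :
    ∀ (ε : Bool) (i j : I), i ≠ j → ∀ (s : ℕ) (rs : List ℕ),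
      rs.length = (1 - a i j).toNat →
        rs.foldr (fun r acc => ⁅X ε i r, acc⁆) (X ε j s) = 0 := by
  intro ε i j hij s rs hlen
  have : IsAddTorsionFree L := .of_isTorsionFree ℂ L
  rw [IsShiftPair.foldr_lie_eq_adZeroIter (hshift ε i i) (hshift ε i j), hlen]
  exact hserre0 ε i j hij _

/-- In the Lie algebra `s` generated by `X_{ir}^±, H_{ir}` (i ∈ I, r ≥ 0)
subject to the relations
`[H_{ir},H_{js}] = 0`, `[H_{ir},X_{js}^±] = ±2d_{ij} X_{j,r+s}^±`,
`[X_{ir}^+,X_{js}^-] = δ_{ij} H_{i,r+s}`, `[X_{i,r+1}^±,X_{js}^±] = [X_{ir}^±,X_{j,s+1}^±]`,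
and the degree-zero Serre relations `ad(X_{i0}^±)^{1-a_{ij}}(X_{jr}^±) = 0` for `i ≠ j`,
the Serre relations hold in all degrees:
`[X_{i,r_1}^±, [X_{i,r_2}^±, …, [X_{i,r_m}^±, X_{js}^±]⋯]] = 0` for `i ≠ j`,
`m = 1 - a_{ij}`, and all `s, r_1, …, r_m ≥ 0`.
Here `A = (a_{ij})` is a symmetrizable generalized Cartan matrix (so `a_{ij} ≤ 0` for
`i ≠ j`), `d_{ij} = (α_i,α_j)/2` with `d_{ii} ≠ 0`; signs are encoded by `ε : Bool`. -/
theorem stmt8 {L : Type*} [LieRing L] [LieAlgebra ℂ L] {I : Type*} [DecidableEq I]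
    (X : Bool → I → ℕ → L) (H : I → ℕ → L) (d : I → I → ℂ) (a : I → I → ℤ)
    (hdii : ∀ i, d i i ≠ 0)
    (ha : ∀ i j, i ≠ j → a i j ≤ 0)
    (hHH : ∀ (i j : I) (r s : ℕ), ⁅H i r, H j s⁆ = 0)
    (hHX : ∀ (ε : Bool) (i j : I) (r s : ℕ),
      ⁅H i r, X ε j s⁆ = ((if ε then 1 else -1) * 2 * d i j) • X ε j (r + s))
    (hXpm : ∀ (i j : I) (r s : ℕ),
      ⁅X true i r, X false j s⁆ = if i = j then H i (r + s) else 0)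
    (hshift : ∀ (ε : Bool) (i j : I) (r s : ℕ),
      ⁅X ε i (r + 1), X ε j s⁆ = ⁅X ε i r, X ε j (s + 1)⁆)
    (hserre0 : ∀ (ε : Bool) (i j : I), i ≠ j → ∀ r : ℕ,
      (fun y => ⁅X ε i 0, y⁆)^[(1 - a i j).toNat] (X ε j r) = 0) :
    ∀ (ε : Bool) (i j : I), i ≠ j → ∀ (s : ℕ) (rs : List ℕ),
      rs.length = (1 - a i j).toNat →
        rs.foldr (fun r acc => ⁅X ε i r, acc⁆) (X ε j s) = 0 :=
  stmt8_general X a hshift hserre0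
end

section
/- Define f(z_1, z_2, w) = (z_2^{-1}/(1-z_2^{-1}w_∓) + w^{-1}/(1-w^{-1}(z_2)_∓)) · (w^{-1}(z_2-z_1)(z_2-z_1±ℏ)/(1-w^{-1}(z_1)_∓) + z_1^{-1}(z_1-z_2)(z_1-z_2±ℏ)/(1-z_1^{-1}w_∓)), where a_± = a ± ℏ/2 and each geometric series x^{-1}/(1-x^{-1}y) is expanded as Σ_{k≥0} y^k x^{-k-1}. Then f(z_1,z_2,w) + f(z_2,z_1,w) = 0 as formal series. -/
/- We model formal distributions in `ℂ[[ℏ]][[z₁^{±1}, z₂^{±1}, w^{±1}]]` by coefficient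
functions `ℤ → ℤ → ℤ → ℤ → ℂ`, recording the coefficient of `z₁^a z₂^b w^c ℏ^m`.
The sign `± = e ∈ {1,-1}`, so `x∓ = x - eℏ/2` and `±ℏ = eℏ`. -/

/-- Coefficient of `x^a y^c ℏ^μ` in `x^{-1}/(1-x^{-1}y∓) = Σ_{k≥0} (y - eℏ/2)^k x^{-k-1}`. -/
noncomputable def geomHalf (e : ℤ) (a c μ : ℤ) : ℂ :=
  if a ≤ -1 ∧ 0 ≤ μ ∧ c = -a - 1 - μ then
    (((-a - 1).toNat.choose μ.toNat : ℤ) : ℂ) * (-(e : ℂ) / 2) ^ μ.toNat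
  else 0

/-- `z₂^{-1}/(1-z₂^{-1}w∓)` (coefficient of `z₁^a z₂^b w^c ℏ^m`). -/
noncomputable def S1 (e : ℤ) : ℤ → ℤ → ℤ → ℤ → ℂ := fun a b c m =>
  if a = 0 then geomHalf e b c m else 0

/-- `w^{-1}/(1-w^{-1}(z₂)∓)`. -/
noncomputable def S2 (e : ℤ) : ℤ → ℤ → ℤ → ℤ → ℂ := fun a b c m =>
  if a = 0 then geomHalf e c b m else 0

/-- `w^{-1}(z₂-z₁)(z₂-z₁±ℏ)/(1-w^{-1}(z₁)∓)
   = (z₂-z₁)(z₂-z₁+eℏ)·Σ_{k≥0}(z₁ - eℏ/2)^k w^{-k-1}`. -/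
noncomputable def S3 (e : ℤ) : ℤ → ℤ → ℤ → ℤ → ℂ := fun a b c m =>
  (if b = 2 then geomHalf e c a m else 0)
  + (if b = 1 then (-2 : ℂ) * geomHalf e c (a - 1) m else 0)
  + (if b = 0 then geomHalf e c (a - 2) m else 0)
  + (if b = 1 then (e : ℂ) * geomHalf e c a (m - 1) else 0)
  + (if b = 0 then (-(e : ℂ)) * geomHalf e c (a - 1) (m - 1) else 0)

/-- `z₁^{-1}(z₁-z₂)(z₁-z₂±ℏ)/(1-z₁^{-1}w∓)
   = (z₁-z₂)(z₁-z₂+eℏ)·Σ_{k≥0}(w - eℏ/2)^k z₁^{-k-1}`. -/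
noncomputable def S4 (e : ℤ) : ℤ → ℤ → ℤ → ℤ → ℂ := fun a b c m =>
  (if b = 0 then geomHalf e (a - 2) c m else 0)
  + (if b = 1 then (-2 : ℂ) * geomHalf e (a - 1) c m else 0)
  + (if b = 2 then geomHalf e a c m else 0)
  + (if b = 0 then (e : ℂ) * geomHalf e (a - 1) c (m - 1) else 0)
  + (if b = 1 then (-(e : ℂ)) * geomHalf e a c (m - 1) else 0)

/-- Product (convolution) of two formal distributions in `z₁, z₂, w, ℏ`. -/
noncomputable def conv4 (F G : ℤ → ℤ → ℤ → ℤ → ℂ) : ℤ → ℤ → ℤ → ℤ → ℂ :=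
  fun a b c m => ∑ᶠ p : ℤ × ℤ × ℤ × ℤ,
    F p.1 p.2.1 p.2.2.1 p.2.2.2 * G (a - p.1) (b - p.2.1) (c - p.2.2.1) (m - p.2.2.2)

/-- The distribution
`f(z₁,z₂,w) = (z₂^{-1}/(1-z₂^{-1}w∓) + w^{-1}/(1-w^{-1}(z₂)∓)) ·
  (w^{-1}(z₂-z₁)(z₂-z₁±ℏ)/(1-w^{-1}(z₁)∓) + z₁^{-1}(z₁-z₂)(z₁-z₂±ℏ)/(1-z₁^{-1}w∓))`. -/
noncomputable def fDist (e : ℤ) : ℤ → ℤ → ℤ → ℤ → ℂ :=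
  conv4 (fun a b c m => S1 e a b c m + S2 e a b c m)
        (fun a b c m => S3 e a b c m + S4 e a b c m)

/-!
Write `K(x, y)` for the expansion `x⁻¹/(1 - x⁻¹y∓)` of `1/(x - y∓)`. Then `S1 = K(z₂, w)`,
`S2 = K(w, z₂)`, and the kernels in the second factor are `K(w, z₁)` and `K(z₁, w)`, i.e. `S2`
and `S1` with `z₁ ↔ z₂`. Each `K(x, y)` is inverted by its denominator `x - y + eℏ/2` (Pascal's
rule for `geomHalf`). In each of the four products, write the polynomial `(z₂ - z₁)(z₂ - z₁ + eℏ)`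
as a quadratic in the denominators `A` of the left kernel and `B` of the right kernel; every
monomial then collapses (`A²` to `A·K_right`, `AB` to `1`, `B²` to `B·K_left`, `ℏA` to
`ℏ·K_right`, `ℏB` to `ℏ·K_left`), and summing gives
`f = eℏ (S1 + S2 - K(w, z₁) - K(z₁, w))`, which is antisymmetric under `z₁ ↔ z₂`.

These manipulations are legitimate because a left factor has bounded `z₁`-degree and bounded
total degree, a right factor has bounded `z₂`-degree, and both have `ℏ`-degree bounded below:
then every coefficient of `conv4` is a finite sum, and multiplication by polynomials can be moved
across it.
-/

lemma geomHalf_ne_zero {e a c μ : ℤ} (h : geomHalf e a c μ ≠ 0) :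
    a ≤ -1 ∧ 0 ≤ μ ∧ c = -a - 1 - μ := by
  by_contra hc
  exact h (if_neg hc)

lemma geomHalf_mul_denominator (e b c m : ℤ) :
    geomHalf e (b - 1) c m - geomHalf e b (c - 1) m + (e / 2 : ℂ) * geomHalf e b c (m - 1)
      = if b = 0 ∧ c = 0 ∧ m = 0 then 1 else 0 := by
  unfold geomHalf
  split_ifs
  all_goals try (exfalso; omega)
  · -- Pascal's rule
    rw [show (-(b - 1) - 1).toNat = (-b - 1).toNat + 1 by omega,
      show m.toNat = (m - 1).toNat + 1 by omega, Nat.choose_succ_succ]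
    push_cast
    ring
  · rw [show m.toNat = 0 by omega]
    simp
  · obtain ⟨rfl, rfl, rfl⟩ := ‹b = 0 ∧ c = 0 ∧ m = 0›
    norm_num
  · rw [show (-(b - 1) - 1).toNat = 0 by omega,
      Nat.choose_eq_zero_of_lt (by omega : 0 < m.toNat)]
    simp
  · ring

abbrev FormalDist := ℤ → ℤ → ℤ → ℤ → ℂ

namespace FormalDist

variable {F F' G G' : FormalDist}

abbrev Exponent := ℤ × ℤ × ℤ × ℤ

def z₁ : Exponent := (1, 0, 0, 0)
def z₂ : Exponent := (0, 1, 0, 0)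
def w : Exponent := (0, 0, 1, 0)
def ℏ : Exponent := (0, 0, 0, 1)

-- The series `1 = z₁⁰z₂⁰w⁰ℏ⁰`, not the constant function `1`.
def one : FormalDist := fun a b c m => if a = 0 ∧ b = 0 ∧ c = 0 ∧ m = 0 then 1 else 0

def mulMonomial (v : Exponent) (F : FormalDist) : FormalDist :=
  fun a b c m => F (a - v.1) (b - v.2.1) (c - v.2.2.1) (m - v.2.2.2)

def mulLinear (c : ℂ) (u v : Exponent) (F : FormalDist) : FormalDist :=
  mulMonomial u F - mulMonomial v F + c • mulMonomial ℏ F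

def swap₁₂ (F : FormalDist) : FormalDist := fun a b c m => F b a c m

def supportedInSome (P : ℕ → Exponent → Prop) (hP : Monotone P) :
    Submodule ℂ FormalDist where
  carrier := {F | ∃ N, ∀ p q r t, F p q r t ≠ 0 → P N (p, q, r, t)}
  zero_mem' := ⟨0, fun _ _ _ _ h => absurd rfl h⟩
  add_mem' := by
    rintro F G ⟨N, hN⟩ ⟨M, hM⟩
    refine ⟨max N M, fun p q r t h => ?_⟩
    by_cases hF : F p q r t = 0
    · exact hP (le_max_right N M) _ (hM p q r t (by simpa [hF] using h))
    · exact hP (le_max_left N M) _ (hN p q r t hF)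
  smul_mem' := by
    rintro c F ⟨N, hN⟩
    exact ⟨N, fun p q r t h => hN p q r t (right_ne_zero_of_mul h)⟩

lemma mulMonomial_mem_supportedInSome {P : ℕ → Exponent → Prop} {hP : Monotone P}
    (v : Exponent)
    (hshift : ∀ N, ∃ M, ∀ p q r t,
      P N (p - v.1, q - v.2.1, r - v.2.2.1, t - v.2.2.2) → P M (p, q, r, t))
    (hF : F ∈ supportedInSome P hP) : mulMonomial v F ∈ supportedInSome P hP := by
  obtain ⟨N, hN⟩ := hF
  obtain ⟨M, hM⟩ := hshift N
  exact ⟨M, fun p q r t h => hM p q r t (hN _ _ _ _ h)⟩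

def admissibleLeft : Submodule ℂ FormalDist :=
  supportedInSome
    (fun N x => x.1.natAbs ≤ N ∧ (x.1 + x.2.1 + x.2.2.1 + x.2.2.2).natAbs ≤ N ∧ -N ≤ x.2.2.2)
    (fun _ _ _ _ _ => by omega)

def admissibleRight : Submodule ℂ FormalDist :=
  supportedInSome (fun N x => x.2.1.natAbs ≤ N ∧ -N ≤ x.2.2.2) (fun _ _ _ _ _ => by omega)

lemma mulMonomial_mem_admissibleLeft (v : Exponent)
    (hF : F ∈ admissibleLeft) : mulMonomial v F ∈ admissibleLeft :=
  mulMonomial_mem_supportedInSome v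
    (fun N => ⟨N + v.1.natAbs + v.2.1.natAbs + v.2.2.1.natAbs + v.2.2.2.natAbs,
      fun _ _ _ _ h => by simp only at h ⊢; omega⟩) hF

lemma mulMonomial_mem_admissibleRight (v : Exponent)
    (hF : F ∈ admissibleRight) : mulMonomial v F ∈ admissibleRight :=
  mulMonomial_mem_supportedInSome v
    (fun N => ⟨N + v.2.1.natAbs + v.2.2.2.natAbs,
      fun _ _ _ _ h => by simp only at h ⊢; omega⟩) hF

lemma mulLinear_mem_admissibleRight (c : ℂ) (u v : Exponent)
    (hF : F ∈ admissibleRight) : mulLinear c u v F ∈ admissibleRight :=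
  add_mem (sub_mem (mulMonomial_mem_admissibleRight u hF) (mulMonomial_mem_admissibleRight v hF))
    (Submodule.smul_mem _ c (mulMonomial_mem_admissibleRight ℏ hF))

lemma conv4_summand_finite (hF : F ∈ admissibleLeft)
    (hG : G ∈ admissibleRight) (a b c m : ℤ) :
    (Function.support fun p : Exponent => F p.1 p.2.1 p.2.2.1 p.2.2.2 *
      G (a - p.1) (b - p.2.1) (c - p.2.2.1) (m - p.2.2.2)).Finite := by
  obtain ⟨N, hN⟩ := hF
  obtain ⟨M, hM⟩ := hG
  refine (Set.finite_Icc ((-N : ℤ), b - M, -3 * N - b - 2 * M - m, (-N : ℤ))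
    ((N : ℤ), b + M, 3 * N - b + M, m + M)).subset ?_
  rintro ⟨p, q, r, t⟩ h
  have hp := hN p q r t (left_ne_zero_of_mul h)
  have hq := hM _ _ _ _ (right_ne_zero_of_mul h)
  simp only [Set.mem_Icc, Prod.mk_le_mk] at hp hq ⊢
  omega

lemma conv4_add_right (hF : F ∈ admissibleLeft) (hG : G ∈ admissibleRight)
    (hG' : G' ∈ admissibleRight) : conv4 F (G + G') = conv4 F G + conv4 F G' := by
  funext a b c m
  simp only [conv4, Pi.add_apply, mul_add]
  exact finsum_add_distrib (conv4_summand_finite hF hG a b c m)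
    (conv4_summand_finite hF hG' a b c m)

lemma conv4_sub_right (hF : F ∈ admissibleLeft) (hG : G ∈ admissibleRight)
    (hG' : G' ∈ admissibleRight) : conv4 F (G - G') = conv4 F G - conv4 F G' := by
  funext a b c m
  simp only [conv4, Pi.sub_apply, mul_sub]
  exact finsum_sub_distrib (conv4_summand_finite hF hG a b c m)
    (conv4_summand_finite hF hG' a b c m)

lemma conv4_add_left (hF : F ∈ admissibleLeft) (hF' : F' ∈ admissibleLeft)
    (hG : G ∈ admissibleRight) : conv4 (F + F') G = conv4 F G + conv4 F' G := by
  funext a b c m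
  simp only [conv4, Pi.add_apply, add_mul]
  exact finsum_add_distrib (conv4_summand_finite hF hG a b c m)
    (conv4_summand_finite hF' hG a b c m)

lemma conv4_sub_left (hF : F ∈ admissibleLeft) (hF' : F' ∈ admissibleLeft)
    (hG : G ∈ admissibleRight) : conv4 (F - F') G = conv4 F G - conv4 F' G := by
  funext a b c m
  simp only [conv4, Pi.sub_apply, sub_mul]
  exact finsum_sub_distrib (conv4_summand_finite hF hG a b c m)
    (conv4_summand_finite hF' hG a b c m)

lemma conv4_smul_right (k : ℂ) (F G : FormalDist) : conv4 F (k • G) = k • conv4 F G := by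
  funext a b c m
  simp only [conv4, Pi.smul_apply, mul_smul_comm, smul_finsum]

lemma conv4_smul_left (k : ℂ) (F G : FormalDist) : conv4 (k • F) G = k • conv4 F G := by
  funext a b c m
  simp only [conv4, Pi.smul_apply, smul_mul_assoc, smul_finsum]

lemma conv4_mulMonomial_right (v : Exponent) (F G : FormalDist) :
    conv4 F (mulMonomial v G) = mulMonomial v (conv4 F G) := by
  funext a b c m
  simp only [conv4, mulMonomial, sub_right_comm _ _ v.1, sub_right_comm _ _ v.2.1,
    sub_right_comm _ _ v.2.2.1, sub_right_comm _ _ v.2.2.2]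

lemma conv4_mulMonomial_left (v : Exponent) (F G : FormalDist) :
    conv4 (mulMonomial v F) G = mulMonomial v (conv4 F G) := by
  funext a b c m
  simp only [conv4, mulMonomial]
  rw [← finsum_comp_equiv (Equiv.addRight v)]
  refine finsum_congr fun p => ?_
  simp only [Equiv.coe_addRight, Prod.fst_add, Prod.snd_add, add_sub_cancel_right,
    sub_add_eq_sub_sub_swap]

lemma conv4_one_right (F : FormalDist) : conv4 F one = F := by
  funext a b c m
  rw [conv4, finsum_eq_single _ (a, b, c, m)]
  · simp [one]
  · rintro ⟨p, q, r, t⟩ hne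
    have : ¬(a - p = 0 ∧ b - q = 0 ∧ c - r = 0 ∧ m - t = 0) := fun h =>
      hne (by simp only [Prod.mk.injEq]; omega)
    simp [one, this]

lemma conv4_one_left (G : FormalDist) : conv4 one G = G := by
  funext a b c m
  rw [conv4, finsum_eq_single _ (0, 0, 0, 0)]
  · simp [one]
  · rintro ⟨p, q, r, t⟩ hne
    have : ¬(p = 0 ∧ q = 0 ∧ r = 0 ∧ t = 0) := fun h =>
      hne (by simp only [Prod.mk.injEq]; omega)
    simp [one, this]

lemma conv4_mulLinear_right (hF : F ∈ admissibleLeft) (hG : G ∈ admissibleRight)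
    (k : ℂ) (u v : Exponent) : conv4 F (mulLinear k u v G) = mulLinear k u v (conv4 F G) := by
  have hu := mulMonomial_mem_admissibleRight u hG
  have hv := mulMonomial_mem_admissibleRight v hG
  have hℏ := Submodule.smul_mem _ k (mulMonomial_mem_admissibleRight ℏ hG)
  rw [mulLinear, conv4_add_right hF (sub_mem hu hv) hℏ, conv4_sub_right hF hu hv,
    conv4_smul_right, conv4_mulMonomial_right, conv4_mulMonomial_right,
    conv4_mulMonomial_right, mulLinear]

lemma conv4_mulLinear_left (hF : F ∈ admissibleLeft) (hG : G ∈ admissibleRight)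
    (k : ℂ) (u v : Exponent) : conv4 (mulLinear k u v F) G = mulLinear k u v (conv4 F G) := by
  have hu := mulMonomial_mem_admissibleLeft u hF
  have hv := mulMonomial_mem_admissibleLeft v hF
  have hℏ := Submodule.smul_mem _ k (mulMonomial_mem_admissibleLeft ℏ hF)
  rw [mulLinear, conv4_add_left (sub_mem hu hv) hℏ hG, conv4_sub_left hu hv hG,
    conv4_smul_left, conv4_mulMonomial_left, conv4_mulMonomial_left,
    conv4_mulMonomial_left, mulLinear]

lemma conv4_mulLinear_comm (hF : F ∈ admissibleLeft) (hG : G ∈ admissibleRight)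
    (k : ℂ) (u v : Exponent) : conv4 F (mulLinear k u v G) = conv4 (mulLinear k u v F) G := by
  rw [conv4_mulLinear_right hF hG, conv4_mulLinear_left hF hG]

theorem conv4_quadratic {K : FormalDist} {k k' c₂ c₄ c₅ : ℂ} {u v u' v' : Exponent}
    (hF : F ∈ admissibleLeft) (hK : K ∈ admissibleRight)
    (hA : mulLinear k u v F = one) (hB : mulLinear k' u' v' K = one)
    (hG : G = mulLinear k u v (mulLinear k u v K) + c₂ • mulLinear k u v (mulLinear k' u' v' K)
      + mulLinear k' u' v' (mulLinear k' u' v' K) + c₄ • mulMonomial ℏ (mulLinear k u v K)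
      + c₅ • mulMonomial ℏ (mulLinear k' u' v' K)) :
    conv4 F G = mulLinear k u v K + c₂ • one + mulLinear k' u' v' F + c₄ • mulMonomial ℏ K
      + c₅ • mulMonomial ℏ F := by
  have hAK := mulLinear_mem_admissibleRight k u v hK
  have hBK := mulLinear_mem_admissibleRight k' u' v' hK
  have h₁ : conv4 F (mulLinear k u v (mulLinear k u v K)) = mulLinear k u v K := by
    rw [conv4_mulLinear_comm hF hAK, hA, conv4_one_left]
  have h₂ : conv4 F (mulLinear k u v (mulLinear k' u' v' K)) = one := by
    rw [conv4_mulLinear_comm hF hBK, hA, hB, conv4_one_left]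
  have h₃ : conv4 F (mulLinear k' u' v' (mulLinear k' u' v' K)) = mulLinear k' u' v' F := by
    rw [conv4_mulLinear_right hF hBK, hB, conv4_one_right]
  have h₄ : conv4 F (mulMonomial ℏ (mulLinear k u v K)) = mulMonomial ℏ K := by
    rw [conv4_mulMonomial_right, conv4_mulLinear_comm hF hK, hA, conv4_one_left]
  have h₅ : conv4 F (mulMonomial ℏ (mulLinear k' u' v' K)) = mulMonomial ℏ F := by
    rw [conv4_mulMonomial_right, hB, conv4_one_right]
  subst hG
  rw [conv4_add_right hF ?_ ?_, conv4_add_right hF ?_ ?_, conv4_add_right hF ?_ ?_,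
    conv4_add_right hF ?_ ?_, conv4_smul_right, conv4_smul_right, conv4_smul_right,
    h₁, h₂, h₃, h₄, h₅]
  all_goals apply_rules [mulLinear_mem_admissibleRight, mulMonomial_mem_admissibleRight,
    Submodule.smul_mem, add_mem]

lemma S1_mem_admissibleLeft (e : ℤ) : S1 e ∈ admissibleLeft :=
  ⟨1, fun p q r t h => by
    obtain ⟨rfl, h⟩ := ite_ne_right_iff.mp h
    have := geomHalf_ne_zero h
    simp only
    omega⟩

lemma S2_mem_admissibleLeft (e : ℤ) : S2 e ∈ admissibleLeft :=
  ⟨1, fun p q r t h => by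
    obtain ⟨rfl, h⟩ := ite_ne_right_iff.mp h
    have := geomHalf_ne_zero h
    simp only
    omega⟩

lemma swap₁₂_S1_mem_admissibleRight (e : ℤ) : swap₁₂ (S1 e) ∈ admissibleRight :=
  ⟨0, fun p q r t h => by
    obtain ⟨rfl, h⟩ := ite_ne_right_iff.mp h
    have := geomHalf_ne_zero h
    simp only
    omega⟩

lemma swap₁₂_S2_mem_admissibleRight (e : ℤ) : swap₁₂ (S2 e) ∈ admissibleRight :=
  ⟨0, fun p q r t h => by
    obtain ⟨rfl, h⟩ := ite_ne_right_iff.mp h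
    have := geomHalf_ne_zero h
    simp only
    omega⟩

lemma mulLinear_S1 (e : ℤ) : mulLinear (e / 2) z₂ w (S1 e) = one := by
  funext a b c m
  by_cases ha : a = 0 <;>
    simp [mulLinear, mulMonomial, S1, one, z₂, w, ℏ, ha, geomHalf_mul_denominator]

lemma mulLinear_S2 (e : ℤ) : mulLinear (e / 2) w z₂ (S2 e) = one := by
  funext a b c m
  by_cases ha : a = 0 <;>
    simp [mulLinear, mulMonomial, S2, one, z₂, w, ℏ, ha, geomHalf_mul_denominator, and_left_comm]

lemma mulLinear_swap₁₂_S1 (e : ℤ) : mulLinear (e / 2) z₁ w (swap₁₂ (S1 e)) = one := by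
  funext a b c m
  by_cases hb : b = 0 <;>
    simp [mulLinear, mulMonomial, swap₁₂, S1, one, z₁, w, ℏ, hb, geomHalf_mul_denominator]

lemma mulLinear_swap₁₂_S2 (e : ℤ) : mulLinear (e / 2) w z₁ (swap₁₂ (S2 e)) = one := by
  funext a b c m
  by_cases hb : b = 0 <;>
    simp [mulLinear, mulMonomial, swap₁₂, S2, one, z₁, w, ℏ, hb, geomHalf_mul_denominator,
      and_left_comm]

lemma S3_eq (e : ℤ) : S3 e = mulLinear 0 z₂ z₁ (mulLinear e z₂ z₁ (swap₁₂ (S2 e))) := by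
  funext a b c m
  simp only [S3, mulLinear, mulMonomial, swap₁₂, S2, z₁, z₂, ℏ, Pi.add_apply, Pi.sub_apply,
    Pi.smul_apply, smul_eq_mul, sub_zero, sub_sub, Int.reduceAdd]
  split_ifs <;> first | (exfalso; omega) | ring

lemma S4_eq (e : ℤ) : S4 e = mulLinear 0 z₁ z₂ (mulLinear e z₁ z₂ (swap₁₂ (S1 e))) := by
  funext a b c m
  simp only [S4, mulLinear, mulMonomial, swap₁₂, S1, z₁, z₂, ℏ, Pi.add_apply, Pi.sub_apply,
    Pi.smul_apply, smul_eq_mul, sub_zero, sub_sub, Int.reduceAdd]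
  split_ifs <;> first | (exfalso; omega) | ring

-- The quadratic factor of `S3` or `S4`, written in the denominators of the left kernel (`S1` or
-- `S2`, named by the suffix) and of the right kernel.
lemma S3_eq_z₂w (e : ℤ) : S3 e =
    mulLinear (e / 2) z₂ w (mulLinear (e / 2) z₂ w (swap₁₂ (S2 e)))
      + (2 : ℂ) • mulLinear (e / 2) z₂ w (mulLinear (e / 2) w z₁ (swap₁₂ (S2 e)))
      + mulLinear (e / 2) w z₁ (mulLinear (e / 2) w z₁ (swap₁₂ (S2 e)))
      + (-e : ℂ) • mulMonomial ℏ (mulLinear (e / 2) z₂ w (swap₁₂ (S2 e)))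
      + (-e : ℂ) • mulMonomial ℏ (mulLinear (e / 2) w z₁ (swap₁₂ (S2 e))) := by
  rw [S3_eq]
  funext a b c m
  simp only [mulLinear, mulMonomial, z₁, z₂, w, ℏ, Pi.add_apply, Pi.sub_apply, Pi.smul_apply,
    smul_eq_mul, sub_zero]
  ring

lemma S3_eq_wz₂ (e : ℤ) : S3 e =
    mulLinear (e / 2) w z₂ (mulLinear (e / 2) w z₂ (swap₁₂ (S2 e)))
      + (-2 : ℂ) • mulLinear (e / 2) w z₂ (mulLinear (e / 2) w z₁ (swap₁₂ (S2 e)))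
      + mulLinear (e / 2) w z₁ (mulLinear (e / 2) w z₁ (swap₁₂ (S2 e)))
      + (-e : ℂ) • mulMonomial ℏ (mulLinear (e / 2) w z₂ (swap₁₂ (S2 e)))
      + (e : ℂ) • mulMonomial ℏ (mulLinear (e / 2) w z₁ (swap₁₂ (S2 e))) := by
  rw [S3_eq]
  funext a b c m
  simp only [mulLinear, mulMonomial, z₁, z₂, w, ℏ, Pi.add_apply, Pi.sub_apply, Pi.smul_apply,
    smul_eq_mul, sub_zero]
  ring

lemma S4_eq_z₂w (e : ℤ) : S4 e =
    mulLinear (e / 2) z₂ w (mulLinear (e / 2) z₂ w (swap₁₂ (S1 e)))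
      + (-2 : ℂ) • mulLinear (e / 2) z₂ w (mulLinear (e / 2) z₁ w (swap₁₂ (S1 e)))
      + mulLinear (e / 2) z₁ w (mulLinear (e / 2) z₁ w (swap₁₂ (S1 e)))
      + (-e : ℂ) • mulMonomial ℏ (mulLinear (e / 2) z₂ w (swap₁₂ (S1 e)))
      + (e : ℂ) • mulMonomial ℏ (mulLinear (e / 2) z₁ w (swap₁₂ (S1 e))) := by
  rw [S4_eq]
  funext a b c m
  simp only [mulLinear, mulMonomial, z₁, z₂, w, ℏ, Pi.add_apply, Pi.sub_apply, Pi.smul_apply,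
    smul_eq_mul, sub_zero]
  ring

lemma S4_eq_wz₂ (e : ℤ) : S4 e =
    mulLinear (e / 2) w z₂ (mulLinear (e / 2) w z₂ (swap₁₂ (S1 e)))
      + (2 : ℂ) • mulLinear (e / 2) w z₂ (mulLinear (e / 2) z₁ w (swap₁₂ (S1 e)))
      + mulLinear (e / 2) z₁ w (mulLinear (e / 2) z₁ w (swap₁₂ (S1 e)))
      + (-e : ℂ) • mulMonomial ℏ (mulLinear (e / 2) w z₂ (swap₁₂ (S1 e)))
      + (-e : ℂ) • mulMonomial ℏ (mulLinear (e / 2) z₁ w (swap₁₂ (S1 e))) := by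
  rw [S4_eq]
  funext a b c m
  simp only [mulLinear, mulMonomial, z₁, z₂, w, ℏ, Pi.add_apply, Pi.sub_apply, Pi.smul_apply,
    smul_eq_mul, sub_zero]
  ring

theorem fDist_eq (e : ℤ) :
    fDist e = (e : ℂ) • mulMonomial ℏ (S1 e + S2 e - swap₁₂ (S2 e) - swap₁₂ (S1 e)) := by
  have hS3 : S3 e ∈ admissibleRight := S3_eq e ▸ mulLinear_mem_admissibleRight _ _ _
    (mulLinear_mem_admissibleRight _ _ _ (swap₁₂_S2_mem_admissibleRight e))
  have hS4 : S4 e ∈ admissibleRight := S4_eq e ▸ mulLinear_mem_admissibleRight _ _ _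
    (mulLinear_mem_admissibleRight _ _ _ (swap₁₂_S1_mem_admissibleRight e))
  have h₁₃ := conv4_quadratic (S1_mem_admissibleLeft e) (swap₁₂_S2_mem_admissibleRight e)
    (mulLinear_S1 e) (mulLinear_swap₁₂_S2 e) (S3_eq_z₂w e)
  have h₁₄ := conv4_quadratic (S1_mem_admissibleLeft e) (swap₁₂_S1_mem_admissibleRight e)
    (mulLinear_S1 e) (mulLinear_swap₁₂_S1 e) (S4_eq_z₂w e)
  have h₂₃ := conv4_quadratic (S2_mem_admissibleLeft e) (swap₁₂_S2_mem_admissibleRight e)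
    (mulLinear_S2 e) (mulLinear_swap₁₂_S2 e) (S3_eq_wz₂ e)
  have h₂₄ := conv4_quadratic (S2_mem_admissibleLeft e) (swap₁₂_S1_mem_admissibleRight e)
    (mulLinear_S2 e) (mulLinear_swap₁₂_S1 e) (S4_eq_wz₂ e)
  change conv4 (S1 e + S2 e) (S3 e + S4 e) = _
  rw [conv4_add_left (S1_mem_admissibleLeft e) (S2_mem_admissibleLeft e) (add_mem hS3 hS4),
    conv4_add_right (S1_mem_admissibleLeft e) hS3 hS4,
    conv4_add_right (S2_mem_admissibleLeft e) hS3 hS4, h₁₃, h₁₄, h₂₃, h₂₄]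
  funext a b c m
  simp only [mulLinear, mulMonomial, z₁, z₂, w, ℏ, Pi.add_apply, Pi.sub_apply, Pi.smul_apply,
    smul_eq_mul, sub_zero]
  ring

end FormalDist

theorem stmt14_general (e : ℤ) :
    ∀ a b c m : ℤ, fDist e a b c m + fDist e b a c m = 0 := by
  intro a b c m
  simp only [FormalDist.fDist_eq, FormalDist.mulMonomial, FormalDist.swap₁₂, FormalDist.ℏ,
    Pi.smul_apply, Pi.add_apply, Pi.sub_apply, smul_eq_mul]
  ring

/-- `f(z₁,z₂,w) + f(z₂,z₁,w) = 0` as formal series (coefficientwise;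
swapping `z₁ ↔ z₂` swaps the exponents `a ↔ b`). -/
theorem stmt14 (e : ℤ) (he : e = 1 ∨ e = -1) :
    ∀ a b c m : ℤ, fDist e a b c m + fDist e b a c m = 0 :=
  stmt14_general e
end

section
/- Let g be a perfect Lie algebra over ℂ, and let π : h → g be a central extension of g (i.e., π is surjective with ker π contained in the center of h) such that h is also perfect. If ψ : u → h is a universal central extension of h, then π ∘ ψ : u → g is a universal central extension of g. In particular, if g'[t] is a central extension of g₀[t₁^{±1}, t₂] with central kernel ℂ[t₂]K, then uce(g'[t]) ≅ uce(g₀[t₁^{±1}, t₂]). -/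
universe u

/-- A morphism of Lie algebras is a central extension if it is surjective and its
kernel is contained in the center. -/
def IsCentralExtension {L M : Type u} [LieRing L] [LieAlgebra ℂ L]
    [LieRing M] [LieAlgebra ℂ M] (π : L →ₗ⁅ℂ⁆ M) : Prop :=
  Function.Surjective π ∧ ∀ x : L, π x = 0 → ∀ y : L, ⁅x, y⁆ = 0

/-- A central extension `p : U → M` is universal if for every central extension
`q : E → M` there is a unique morphism `f : U → E` with `q ∘ f = p`. -/
def IsUniversalCentralExtension {U M : Type u} [LieRing U] [LieAlgebra ℂ U]
    [LieRing M] [LieAlgebra ℂ M] (p : U →ₗ⁅ℂ⁆ M) : Prop :=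
  IsCentralExtension p ∧
    ∀ (E : Type u) (_ : LieRing E) (_ : LieAlgebra ℂ E) (q : E →ₗ⁅ℂ⁆ M),
      IsCentralExtension q → ∃! f : U →ₗ⁅ℂ⁆ E, q.comp f = p

/-- A Lie algebra is perfect if it equals its own derived ideal. -/
def IsPerfectLie (L : Type u) [LieRing L] [LieAlgebra ℂ L] : Prop :=
  ∀ x : L, x ∈ (⁅(⊤ : LieIdeal ℂ L), (⊤ : LieIdeal ℂ L)⁆ : LieIdeal ℂ L)

set_option linter.unusedSectionVars false
section ProdLie
variable (L M : Type u) [LieRing L] [LieAlgebra ℂ L] [LieRing M] [LieAlgebra ℂ M]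

instance prodLieRing : LieRing (L × M) where
  bracket p q := (⁅p.1, q.1⁆, ⁅p.2, q.2⁆)
  add_lie p q r := by
    show (⁅p.1 + q.1, r.1⁆, ⁅p.2 + q.2, r.2⁆) = (⁅p.1, r.1⁆ + ⁅q.1, r.1⁆, ⁅p.2, r.2⁆ + ⁅q.2, r.2⁆)
    exact Prod.ext (add_lie _ _ _) (add_lie _ _ _)
  lie_add p q r := by
    show (⁅p.1, q.1 + r.1⁆, ⁅p.2, q.2 + r.2⁆) = (⁅p.1, q.1⁆ + ⁅p.1, r.1⁆, ⁅p.2, q.2⁆ + ⁅p.2, r.2⁆)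
    exact Prod.ext (lie_add _ _ _) (lie_add _ _ _)
  lie_self p := by
    show (⁅p.1, p.1⁆, ⁅p.2, p.2⁆) = (0, 0)
    exact Prod.ext (lie_self _) (lie_self _)
  leibniz_lie p q r := by
    show (⁅p.1, ⁅q.1, r.1⁆⁆, ⁅p.2, ⁅q.2, r.2⁆⁆) =
      (⁅⁅p.1, q.1⁆, r.1⁆ + ⁅q.1, ⁅p.1, r.1⁆⁆, ⁅⁅p.2, q.2⁆, r.2⁆ + ⁅q.2, ⁅p.2, r.2⁆⁆)
    exact Prod.ext (leibniz_lie _ _ _) (leibniz_lie _ _ _)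

instance prodLieAlgebra : LieAlgebra ℂ (L × M) where
  lie_smul c p q := by
    show (⁅p.1, c • q.1⁆, ⁅p.2, c • q.2⁆) = (c • ⁅p.1, q.1⁆, c • ⁅p.2, q.2⁆)
    exact Prod.ext (lie_smul _ _ _) (lie_smul _ _ _)

@[simp] lemma prod_bracket_fst (p q : L × M) : (⁅p, q⁆ : L × M).1 = ⁅p.1, q.1⁆ := rfl
@[simp] lemma prod_bracket_snd (p q : L × M) : (⁅p, q⁆ : L × M).2 = ⁅p.2, q.2⁆ := rfl

def lieFst : (L × M) →ₗ⁅ℂ⁆ L where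
  toFun := Prod.fst
  map_add' _ _ := rfl
  map_smul' _ _ := rfl
  map_lie' := rfl

def lieSnd : (L × M) →ₗ⁅ℂ⁆ M where
  toFun := Prod.snd
  map_add' _ _ := rfl
  map_smul' _ _ := rfl
  map_lie' := rfl
end ProdLie

section Aux

variable {u E L : Type u} [LieRing u] [LieAlgebra ℂ u] [LieRing E] [LieAlgebra ℂ E]

/-- Two Lie algebra morphisms from a perfect Lie algebra that agree on brackets agree. -/
lemma lieHom_ext_of_perfect (hu : IsPerfectLie u) (f₁ f₂ : u →ₗ⁅ℂ⁆ E)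
    (hb : ∀ x y : u, f₁ ⁅x, y⁆ = f₂ ⁅x, y⁆) : f₁ = f₂ := by
  ext x
  have hx : x ∈ Submodule.span ℂ
      {m : u | ∃ (a : (⊤ : LieIdeal ℂ u)) (b : (⊤ : LieIdeal ℂ u)), ⁅(a : u), (b : u)⁆ = m} := by
    rw [← LieSubmodule.lieIdeal_oper_eq_linear_span, LieSubmodule.mem_toSubmodule]
    exact hu x
  induction hx using Submodule.span_induction with
  | mem m hm => obtain ⟨a, b, rfl⟩ := hm; exact hb a b
  | zero => simp
  | add a b _ _ ha hb => simp [map_add, ha, hb]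
  | smul c a _ ha => simp [map_smul, ha]

/-- A universal central extension of a perfect Lie algebra is perfect. -/
lemma perfect_of_uce {h : Type u} [LieRing h] [LieAlgebra ℂ h] (hh : IsPerfectLie h)
    (ψ : u →ₗ⁅ℂ⁆ h) (hψ : IsUniversalCentralExtension ψ) : IsPerfectLie u := by
  set I : LieIdeal ℂ u := ⁅(⊤ : LieIdeal ℂ u), (⊤ : LieIdeal ℂ u)⁆ with hI
  set ψI : ↥I →ₗ⁅ℂ⁆ h := ψ.comp I.incl with hψI
  have hsurj : Function.Surjective ψI := by
    intro a
    have ha : a ∈ Submodule.span ℂ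
        {m : h | ∃ (b : (⊤ : LieIdeal ℂ h)) (c : (⊤ : LieIdeal ℂ h)), ⁅(b : h), (c : h)⁆ = m} := by
      rw [← LieSubmodule.lieIdeal_oper_eq_linear_span, LieSubmodule.mem_toSubmodule]
      exact hh a
    have : a ∈ LinearMap.range (ψI : ↥I →ₗ[ℂ] h) := by
      refine Submodule.span_le.mpr ?_ ha
      rintro m ⟨b, c, rfl⟩
      obtain ⟨b', hb'⟩ := hψ.1.1 (b : h)
      obtain ⟨c', hc'⟩ := hψ.1.1 (c : h)
      refine ⟨⟨⁅b', c'⁆, LieSubmodule.lie_mem_lie trivial trivial⟩, ?_⟩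
      show ψ ⁅b', c'⁆ = ⁅(b : h), (c : h)⁆
      rw [LieHom.map_lie, hb', hc']
    obtain ⟨x, hx⟩ := this
    exact ⟨x, hx⟩
  have hcent : ∀ x : ↥I, ψI x = 0 → ∀ y : ↥I, ⁅x, y⁆ = 0 := by
    intro x hx y
    have := hψ.1.2 (x : u) hx (y : u)
    exact Subtype.ext this
  obtain ⟨f, hf, -⟩ := hψ.2 ↥I inferInstance inferInstance ψI ⟨hsurj, hcent⟩
  obtain ⟨f₀, -, huniq⟩ := hψ.2 u inferInstance inferInstance ψ hψ.1
  have h1 : ψ.comp (I.incl.comp f) = ψ := by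
    ext x
    have := congrArg (fun m => m x) hf
    exact this
  have h2 : ψ.comp (LieHom.id : u →ₗ⁅ℂ⁆ u) = ψ := by ext x; rfl
  have heq : I.incl.comp f = (LieHom.id : u →ₗ⁅ℂ⁆ u) := by
    rw [huniq _ h1, huniq _ h2]
  intro x
  have : I.incl (f x) = x := by
    have := congrArg (fun m => m x) heq
    exact this
  rw [← this]
  exact (f x).2

/-- The pullback of a central extension along a Lie algebra morphism. -/
def liePullback {g h : Type u} [LieRing g] [LieAlgebra ℂ g] [LieRing h] [LieAlgebra ℂ h]
    (q : E →ₗ⁅ℂ⁆ g) (π : h →ₗ⁅ℂ⁆ g) : LieSubalgebra ℂ (E × h) where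
  carrier := {p : E × h | q p.1 = π p.2}
  add_mem' := by
    intro a b ha hb
    show q (a.1 + b.1) = π (a.2 + b.2)
    rw [map_add, map_add, ha, hb]
  zero_mem' := by show q 0 = π 0; rw [map_zero, map_zero]
  smul_mem' := by
    intro c a ha
    show q (c • a.1) = π (c • a.2)
    rw [map_smul, map_smul, ha]
  lie_mem' := by
    intro a b ha hb
    show q ⁅a.1, b.1⁆ = π ⁅a.2, b.2⁆
    rw [LieHom.map_lie, LieHom.map_lie, ha, hb]

end Aux

/-- if `g` is a perfect Lie algebra over ℂ, `π : h → g` a central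
extension with `h` perfect, and `ψ : u → h` a universal central extension of `h`, then
`π ∘ ψ : u → g` is a universal central extension of `g`.  (In particular, applied to the
central extension `g'[t] → g₀[t₁^{±1}, t₂]` with central kernel `ℂ[t₂]K`, it yields
`uce(g'[t]) ≅ uce(g₀[t₁^{±1}, t₂])`.) -/
theorem stmt15 {g h u : Type u}
    [LieRing g] [LieAlgebra ℂ g] [LieRing h] [LieAlgebra ℂ h]
    [LieRing u] [LieAlgebra ℂ u]
    (hg : IsPerfectLie g) (hh : IsPerfectLie h)
    (π : h →ₗ⁅ℂ⁆ g) (hπ : IsCentralExtension π)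
    (ψ : u →ₗ⁅ℂ⁆ h) (hψ : IsUniversalCentralExtension ψ) :
    IsUniversalCentralExtension (π.comp ψ) := by
  have hu : IsPerfectLie u := perfect_of_uce hh ψ hψ
  -- centrality helper: if an element of u is killed by π ∘ ψ then it is central in u
  have key : ∀ x : u, π (ψ x) = 0 → ∀ y : u, ⁅x, y⁆ = 0 := by
    intro x hx
    -- brackets with x are killed by ψ, hence central in u
    have hbr : ∀ a : u, ∀ z : u, ⁅⁅x, a⁆, z⁆ = 0 := by
      intro a
      apply hψ.1.2
      rw [LieHom.map_lie]
      exact hπ.2 (ψ x) hx (ψ a)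
    -- the linear map y ↦ ⁅x, y⁆ kills all brackets
    have hkill : ∀ a b : u, ⁅x, ⁅a, b⁆⁆ = 0 := by
      intro a b
      rw [leibniz_lie, hbr a b, ← lie_skew, hbr b a, neg_zero, add_zero]
    intro y
    have hy : y ∈ Submodule.span ℂ
        {m : u | ∃ (a : (⊤ : LieIdeal ℂ u)) (b : (⊤ : LieIdeal ℂ u)), ⁅(a : u), (b : u)⁆ = m} := by
      rw [← LieSubmodule.lieIdeal_oper_eq_linear_span, LieSubmodule.mem_toSubmodule]
      exact hu y
    induction hy using Submodule.span_induction with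
    | mem m hm => obtain ⟨a, b, rfl⟩ := hm; exact hkill a b
    | zero => simp
    | add a b _ _ ha hb => rw [lie_add, ha, hb, add_zero]
    | smul c a _ ha => rw [lie_smul, ha, smul_zero]
  constructor
  · constructor
    · exact hπ.1.comp hψ.1.1
    · exact key
  · intro E _ _ q hq
    -- the pullback P = E ×_g h is a central extension of h
    set P : LieSubalgebra ℂ (E × h) := liePullback q π with hP
    set qP : ↥P →ₗ⁅ℂ⁆ h := (lieSnd E h).comp P.incl with hqP
    have hPsurj : Function.Surjective qP := by
      intro b
      obtain ⟨e, he⟩ := hq.1 (π b)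
      exact ⟨⟨(e, b), he⟩, rfl⟩
    have hPcent : ∀ x : ↥P, qP x = 0 → ∀ y : ↥P, ⁅x, y⁆ = 0 := by
      intro x hx y
      have hx2 : (x : E × h).2 = 0 := hx
      have hx1 : q (x : E × h).1 = 0 := by
        have := x.2
        rw [this, hx2, map_zero]
      apply Subtype.ext
      apply Prod.ext
      · exact hq.2 _ hx1 _
      · show ⁅(x : E × h).2, (y : E × h).2⁆ = 0
        rw [hx2, zero_lie]
    obtain ⟨f₀, hf₀, -⟩ := hψ.2 ↥P inferInstance inferInstance qP ⟨hPsurj, hPcent⟩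
    refine ⟨(lieFst E h).comp (P.incl.comp f₀), ?_, ?_⟩
    · ext x
      have h2 : ((f₀ x : ↥P) : E × h).2 = ψ x := congrArg (fun m => m x) hf₀
      have h1 : q ((f₀ x : ↥P) : E × h).1 = π ((f₀ x : ↥P) : E × h).2 := (f₀ x).2
      show q ((f₀ x : ↥P) : E × h).1 = π (ψ x)
      rw [h1, h2]
    · intro f hf
      apply lieHom_ext_of_perfect hu
      intro x y
      have hd : ∀ z : u, ∀ w : E, ⁅f z - (lieFst E h).comp (P.incl.comp f₀) z, w⁆ = 0 := by
        intro z w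
        apply hq.2
        rw [map_sub]
        have e1 : q (f z) = π (ψ z) := congrArg (fun m => m z) hf
        have e2 : q ((lieFst E h).comp (P.incl.comp f₀) z) = π (ψ z) := by
          have h2 : ((f₀ z : ↥P) : E × h).2 = ψ z := congrArg (fun m => m z) hf₀
          have h1 : q ((f₀ z : ↥P) : E × h).1 = π ((f₀ z : ↥P) : E × h).2 := (f₀ z).2
          show q ((f₀ z : ↥P) : E × h).1 = π (ψ z)
          rw [h1, h2]
        rw [e1, e2, sub_self]
      set F := (lieFst E h).comp (P.incl.comp f₀) with hF
      have hx : f x = F x + (f x - F x) := by abel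
      have hy' : f y = F y + (f y - F y) := by abel
      rw [LieHom.map_lie, LieHom.map_lie, hx, hy']
      rw [lie_add, add_lie, add_lie]
      have c1 : ⁅f x - F x, F y⁆ = 0 := hd x (F y)
      have c2 : ⁅f x - F x, f y - F y⁆ = 0 := hd x _
      have c3 : ⁅F x, f y - F y⁆ = 0 := by
        rw [← lie_skew]
        rw [hd y (F x), neg_zero]
      rw [c1, c2, c3]
      abel
end
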